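/- Let α be an uncountable type (¬Countable α). Then for every function f : α → ℕ and every m : ℕ with m ∉ range(f), there exists a function g : α → ℕ such that range(f) is a strict subset of range(g) and m ∈ range(g). In particular, clause (iii) of Buzaglo's 'smaller than' relation fails for every f : α → ℕ, so |α| is not smaller than |ℕ| in Buzaglo's sense. -/
import Mathlib

theorem buzaglo_uncountable_not_smaller (α : Type*) (hα : ¬ Countable α) :
    (∀ (f : α → ℕ) (m : ℕ), m ∉ Set.range f →
        ∃ g : α → ℕ, Set.range f ⊂ Set.range g ∧ m ∈ Set.range g) ∧
      ¬ ∃ f : α → ℕ, ∃ m : ℕ, m ∉ Set.range f ∧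
          ¬ ∃ g : α → ℕ, Set.range f ⊂ Set.range g ∧ m ∈ Set.range g := by
  have main : ∀ (f : α → ℕ) (m : ℕ), m ∉ Set.range f →
      ∃ g : α → ℕ, Set.range f ⊂ Set.range g ∧ m ∈ Set.range g := by
    intro f m hm
    classical
    have hninj : ¬ Function.Injective f := fun hinj => hα (Function.Injective.countable hinj)
    rw [Function.not_injective_iff] at hninj
    obtain ⟨a, b, hfab, hab⟩ := hninj
    refine ⟨Function.update f a m, ⟨?_, ?_⟩, ⟨a, Function.update_self a m f⟩⟩
    · rintro x ⟨c, rfl⟩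
      by_cases hc : c = a
      · exact ⟨b, by simp [Function.update_of_ne (by exact fun h => hab h.symm), hc, ← hfab]⟩
      · exact ⟨c, Function.update_of_ne hc m f⟩
    · intro hsub
      exact hm (hsub ⟨a, Function.update_self a m f⟩)
  exact ⟨main, fun ⟨f, m, hm, hng⟩ => hng (main f m hm)⟩
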